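/- arXiv:2206.03704 — 3 statements merged into one kernel-verified Lean document; each statement's English description precedes it below -/
import Mathlib

section
/- If the independence complex Ind(G) of a finite simple graph G is a quasi-forest simplicial complex, then G does not contain an induced cycle C_k for any k ≥ 5. -/
open Finset

/-- A (finite) simplicial complex on vertex type `V`: a downward-closed
collection of finite subsets of `V`. -/
structure SimplicialComplex (V : Type*) [DecidableEq V] [Fintype V] where
  faces : Finset (Finset V)
  down_closed : ∀ F ∈ faces, ∀ H ⊆ F, H ∈ faces

variable {V : Type*} [DecidableEq V] [Fintype V]

/-- The facets (maximal faces) of a simplicial complex. -/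
def SimplicialComplex.facetSet (Δ : SimplicialComplex V) : Finset (Finset V) :=
  Δ.faces.filter (fun F => ∀ G ∈ Δ.faces, F ⊆ G → F = G)

/-- `F` is a leaf of the collection of facets `𝒞`: either it is the only
member, or there is a branch `M ≠ F` with `N ∩ F ⊆ M ∩ F` for all `N ≠ F`. -/
def IsLeafOf (𝒞 : Finset (Finset V)) (F : Finset V) : Prop :=
  F ∈ 𝒞 ∧ (𝒞 = {F} ∨ ∃ M ∈ 𝒞, M ≠ F ∧ ∀ N ∈ 𝒞, N ≠ F → N ∩ F ⊆ M ∩ F)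

/-- A quasi-forest: there is an ordering `F₁, …, F_r` of the facets such that
`Fᵢ` is a leaf of `⟨F₁, …, Fᵢ⟩` for each `i`. -/
def SimplicialComplex.IsQuasiForest (Δ : SimplicialComplex V) : Prop :=
  ∃ l : List (Finset V), l.Nodup ∧ l.toFinset = Δ.facetSet ∧
    ∀ i (h : i < l.length), IsLeafOf (l.take (i + 1)).toFinset l[i]

/-- A forest: every subcomplex (generated by a nonempty subset of the facets)
has a leaf. -/
def SimplicialComplex.IsForest (Δ : SimplicialComplex V) : Prop :=
  ∀ S ⊆ Δ.facetSet, S.Nonempty → ∃ F, IsLeafOf S F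

/-- The simplicial complex generated by a collection of finite sets. -/
def genBy (S : Finset (Finset V)) : SimplicialComplex V where
  faces := Finset.univ.filter (fun F => ∃ G ∈ S, F ⊆ G)
  down_closed := by
    intro F hF H hH
    simp only [Finset.mem_filter, Finset.mem_univ, true_and] at *
    obtain ⟨G, hG, hFG⟩ := hF
    exact ⟨G, hG, hH.trans hFG⟩

/-- The 1-skeleton of a simplicial complex, as a simple graph. -/
def SimplicialComplex.oneSkeleton (Δ : SimplicialComplex V) : SimpleGraph V where
  Adj a b := a ≠ b ∧ ({a, b} : Finset V) ∈ Δ.faces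
  symm := by
    constructor
    intro a b ⟨hab, h⟩
    exact ⟨hab.symm, by rwa [Finset.pair_comm]⟩
  loopless := by constructor; intro a ⟨h, _⟩; exact h rfl

/-- `G` has an induced cycle of length `k`: an injection `ZMod k → V` whose
image induces exactly the cycle adjacencies. -/
def SimpleGraph.HasInducedCycle {W : Type*} (G : SimpleGraph W) (k : ℕ) : Prop :=
  3 ≤ k ∧ ∃ f : ZMod k → W, Function.Injective f ∧
    ∀ i j : ZMod k, G.Adj (f i) (f j) ↔ (i = j + 1 ∨ j = i + 1)

/-- A simplicial `k`-cycle `S_k` in `Δ`: an induced `k`-cycle in the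
1-skeleton such that no facet of `Δ` contains more than two of its vertices. -/
def SimplicialComplex.HasSk (Δ : SimplicialComplex V) (k : ℕ) : Prop :=
  3 ≤ k ∧ ∃ f : ZMod k → V, Function.Injective f ∧
    (∀ i j : ZMod k, Δ.oneSkeleton.Adj (f i) (f j) ↔ (i = j + 1 ∨ j = i + 1)) ∧
    ∀ F ∈ Δ.facetSet, ∀ i j l : ZMod k,
      f i ∈ F → f j ∈ F → f l ∈ F → (i = j ∨ i = l ∨ j = l)

/-- A simplicial `k`-point `P_k` (for `k ≥ 3`). -/
def SimplicialComplex.HasPkAux (Δ : SimplicialComplex V) (k : ℕ) : Prop :=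
  ∃ t : V, ∃ J : Finset V, t ∉ J ∧ J.card = k ∧
    (∀ j ∈ J, insert t (J.erase j) ∈ Δ.faces) ∧ insert t J ∉ Δ.faces

/-- `Δ` has a simplicial `k`-point; by definition a `P_2` is an `S_3`. -/
def SimplicialComplex.HasPk (Δ : SimplicialComplex V) (k : ℕ) : Prop :=
  if k = 2 then Δ.HasSk 3 else Δ.HasPkAux k

/-- `Δ` is flag: every minimal nonface has exactly two elements. -/
def SimplicialComplex.IsFlag (Δ : SimplicialComplex V) : Prop :=
  ∀ F : Finset V, F ∉ Δ.faces → (∀ H ⊂ F, H ∈ Δ.faces) → F.card = 2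

/-- The independence complex of a graph. -/
def indComplex (G : SimpleGraph V) [DecidableRel G.Adj] : SimplicialComplex V where
  faces := Finset.univ.filter (fun F => ∀ a ∈ F, ∀ b ∈ F, ¬ G.Adj a b)
  down_closed := by
    intro F hF H hH
    simp only [Finset.mem_filter, Finset.mem_univ, true_and] at *
    intro a ha b hb
    exact hF a (hH ha) b (hH hb)

/-!
`Ind(G)` is the clique complex of `Gᶜ`, so it suffices that `Gᶜ` has an induced cycle of length
`4` or `5` and that the 1-skeleton of a quasi-forest has no induced cycle of length `m ≥ 4`.
For the latter, remove the facets of a leaf order from the end: every edge of the cycle lies in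
some facet, and no facet contains three vertices of the cycle. If the last facet `F` contains an
edge of the cycle, the two neighbouring edges lie in other facets, so the branch of `F` contains
both endpoints; hence the remaining facets still cover every edge, which is impossible once a
single facet is left.
An induced `C₅` of `G` is one of `Gᶜ` as well, and for `k ≥ 6` an induced `C_k` of `G` contains
two edges without edges between them, an induced `C₄` of `Gᶜ`.
-/

theorem ZMod.natCast_ne_zero_of_pos_of_lt {m n : ℕ} (hn : 0 < n) (hnm : n < m) :
    (n : ZMod m) ≠ 0 := by
  rw [Ne, ZMod.natCast_eq_zero_iff]
  exact fun h => absurd (Nat.le_of_dvd hn h) (by omega)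

theorem ZMod.natCast_inj_of_lt {k x y : ℕ} (hx : x < k) (hy : y < k) :
    (x : ZMod k) = y ↔ x = y := by
  rw [ZMod.natCast_eq_natCast_iff' x y k, Nat.mod_eq_of_lt hx, Nat.mod_eq_of_lt hy]

theorem ZMod.natCast_eq_natCast_add_one_iff {k x y : ℕ} (hx : x < k) (hy : y + 1 < k) :
    (x : ZMod k) = y + 1 ↔ x = y + 1 := by
  rw [← Nat.cast_succ, ZMod.natCast_inj_of_lt hx hy]

section CycleInLeafOrder

variable {α : Type*} {m : ℕ}

def PairwiseConsecutiveIn (u : ZMod m → α) (F : Finset α) : Prop :=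
  ∀ a b, u a ∈ F → u b ∈ F → a = b ∨ a = b + 1 ∨ b = a + 1

def CoversCycleEdges (l : List (Finset α)) (u : ZMod m → α) : Prop :=
  ∀ a, ∃ F ∈ l, u a ∈ F ∧ u (a + 1) ∈ F

theorem PairwiseConsecutiveIn.notMem_add_two (hm : 4 ≤ m) {u : ZMod m → α} {F : Finset α}
    (hF : PairwiseConsecutiveIn u F) {a : ZMod m} (ha : u a ∈ F) : u (a + 2) ∉ F := by
  have ne_zero (n : ℕ) (hn : 0 < n) (hnm : n < m) : (n : ZMod m) ≠ 0 :=
    ZMod.natCast_ne_zero_of_pos_of_lt hn hnm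
  intro ha₂
  rcases hF a (a + 2) ha ha₂ with h | h | h
  · exact ne_zero 2 (by omega) (by omega) (by push_cast; linear_combination -h)
  · exact ne_zero 3 (by omega) (by omega) (by push_cast; linear_combination -h)
  · exact ne_zero 1 (by omega) (by omega) (by push_cast; linear_combination h)

variable [DecidableEq α]

def IsLeafOrder (l : List (Finset α)) : Prop :=
  ∀ i (h : i < l.length), IsLeafOf (l.take (i + 1)).toFinset l[i]

theorem IsLeafOrder.of_append_singleton {l : List (Finset α)} {F : Finset α}
    (h : IsLeafOrder (l ++ [F])) : IsLeafOrder l ∧ IsLeafOf (l ++ [F]).toFinset F := by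
  refine ⟨fun i hi => ?_, ?_⟩
  · have := h i (by simp; omega)
    rwa [List.getElem_append_left hi, List.take_append_of_le_length (by omega)] at this
  · have := h l.length (by simp)
    rwa [List.getElem_concat_length rfl, List.take_of_length_le (by simp)] at this

/-- The edge of the cycle inside a leaf `F` has both neighbouring edges covered by other
facets, so the branch of `F` contains it as well. -/
theorem CoversCycleEdges.of_isLeafOf_append (hm : 4 ≤ m) {u : ZMod m → α}
    {l : List (Finset α)} {F : Finset α} (hF : PairwiseConsecutiveIn u F)
    (hleaf : IsLeafOf (l ++ [F]).toFinset F) (hcov : CoversCycleEdges (l ++ [F]) u) :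
    CoversCycleEdges l u := by
  rcases hleaf.2 with hsingle | ⟨M, hM, hMF, hbranch⟩
  · have eq_F {N : Finset α} (hN : N ∈ l ++ [F]) : N = F := by
      simpa [hsingle] using List.mem_toFinset.mpr hN
    obtain ⟨F₀, hF₀, h₀, -⟩ := hcov 0
    obtain ⟨F₁, hF₁, -, h₂⟩ := hcov 1
    rw [eq_F hF₀] at h₀
    rw [eq_F hF₁, one_add_one_eq_two, ← zero_add 2] at h₂
    exact (hF.notMem_add_two hm h₀ h₂).elim
  have mem_M {N : Finset α} (hN : N ∈ l ++ [F]) (hNF : N ≠ F) {x : α} (hxN : x ∈ N)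
      (hxF : x ∈ F) : x ∈ M :=
    (Finset.mem_inter.mp (hbranch N (List.mem_toFinset.mpr hN) hNF
      (Finset.mem_inter.mpr ⟨hxN, hxF⟩))).1
  intro a
  obtain ⟨N, hN, ha, ha₁⟩ := hcov a
  by_cases hNF : N = F
  swap
  · exact ⟨N, by simpa [hNF] using hN, ha, ha₁⟩
  subst hNF
  obtain ⟨N₀, hN₀, hN₀a, hN₀a'⟩ := hcov (a - 1)
  obtain ⟨N₂, hN₂, hN₂a, hN₂a'⟩ := hcov (a + 1)
  rw [sub_add_cancel] at hN₀a'
  have hN₀N : N₀ ≠ N := by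
    rintro rfl
    exact hF.notMem_add_two hm hN₀a (by rwa [show a - 1 + 2 = a + 1 by ring])
  have hN₂N : N₂ ≠ N := by
    rintro rfl
    exact hF.notMem_add_two hm ha (by rwa [show a + 2 = a + 1 + 1 by ring])
  exact ⟨M, by simpa [hMF] using hM, mem_M hN₀ hN₀N hN₀a' ha, mem_M hN₂ hN₂N hN₂a ha₁⟩

theorem not_coversCycleEdges_of_isLeafOrder (hm : 4 ≤ m) (u : ZMod m → α)
    (l : List (Finset α)) (hl : IsLeafOrder l) (hcons : ∀ F ∈ l, PairwiseConsecutiveIn u F) :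
    ¬ CoversCycleEdges l u := by
  induction l using List.reverseRecOn with
  | nil => exact fun hcov => by simpa using hcov 0
  | append_singleton l F ih =>
    intro hcov
    obtain ⟨hl', hleaf⟩ := hl.of_append_singleton
    refine ih hl' (fun N hN => hcons N (by simp [hN])) ?_
    exact hcov.of_isLeafOf_append hm (hcons F (by simp)) hleaf

end CycleInLeafOrder

namespace SimplicialComplex

theorem exists_mem_facetSet_superset (Δ : SimplicialComplex V) {F : Finset V}
    (hF : F ∈ Δ.faces) : ∃ M ∈ Δ.facetSet, F ⊆ M := by
  obtain ⟨M, hFM, hM⟩ := Δ.faces.exists_le_maximal hF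
  exact ⟨M, Finset.mem_filter.mpr ⟨hM.1, fun N hN hMN => le_antisymm hMN (hM.2 hN hMN)⟩, hFM⟩

theorem IsQuasiForest.not_hasInducedCycle_oneSkeleton {Δ : SimplicialComplex V}
    (hΔ : Δ.IsQuasiForest) {m : ℕ} (hm : 4 ≤ m) : ¬ Δ.oneSkeleton.HasInducedCycle m := by
  rintro ⟨-, u, hinj, hadj⟩
  obtain ⟨l, -, hl, horder⟩ := hΔ
  have face_of_mem {F : Finset V} (hF : F ∈ l) : F ∈ Δ.faces := by
    rw [← List.mem_toFinset, hl] at hF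
    exact (Finset.mem_filter.mp hF).1
  refine not_coversCycleEdges_of_isLeafOrder hm u l horder (fun F hF a b ha hb => ?_) (fun a => ?_)
  · by_cases hab : a = b
    · exact Or.inl hab
    refine Or.inr ((hadj a b).mp ⟨hinj.ne hab, Δ.down_closed F (face_of_mem hF) _ ?_⟩)
    simp [Finset.insert_subset_iff, ha, hb]
  · obtain ⟨-, hedge⟩ := (hadj a (a + 1)).mpr (Or.inr rfl)
    obtain ⟨M, hM, hsub⟩ := Δ.exists_mem_facetSet_superset hedge
    rw [← hl, List.mem_toFinset] at hM
    exact ⟨M, hM, hsub (by simp), hsub (by simp)⟩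

end SimplicialComplex

theorem indComplex_oneSkeleton (G : SimpleGraph V) [DecidableRel G.Adj] :
    (indComplex G).oneSkeleton = Gᶜ := by
  ext a b
  simp only [SimplicialComplex.oneSkeleton, indComplex, SimpleGraph.compl_adj,
    Finset.mem_filter, Finset.mem_univ, true_and, Finset.mem_insert, Finset.mem_singleton]
  refine and_congr_right fun hab => ⟨fun h => h a (.inl rfl) b (.inr rfl), ?_⟩
  rintro h x (rfl | rfl) y (rfl | rfl)
  exacts [G.irrefl, h, fun h' => h h'.symm, G.irrefl]

namespace SimpleGraph

variable {W : Type*} {G : SimpleGraph W}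

/-- `hadj` says that `g` embeds the complement of `C_m` into `C_k` as an induced subgraph. -/
theorem HasInducedCycle.compl_of_map {k m : ℕ} (hG : G.HasInducedCycle k) (hm : 3 ≤ m)
    (g : ZMod m → ZMod k) (hg : Function.Injective g)
    (hadj : ∀ i j, i ≠ j → ((g i = g j + 1 ∨ g j = g i + 1) ↔ ¬(i = j + 1 ∨ j = i + 1))) :
    Gᶜ.HasInducedCycle m := by
  obtain ⟨-, f, hf, hfadj⟩ := hG
  refine ⟨hm, f ∘ g, hf.comp hg, fun i j => ?_⟩
  rw [compl_adj, (hf.comp hg).ne_iff, Function.comp_apply, Function.comp_apply, hfadj]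
  by_cases hij : i = j
  · have h1 : (1 : ZMod m) ≠ 0 := by
      simpa using ZMod.natCast_ne_zero_of_pos_of_lt (m := m) (n := 1) one_pos (by omega)
    simp [hij, h1]
  · simp only [hadj i j hij, ne_eq, hij, not_false_eq_true, not_not, true_and]

theorem HasInducedCycle.compl_five (hG : G.HasInducedCycle 5) : Gᶜ.HasInducedCycle 5 :=
  hG.compl_of_map (by norm_num) (2 * ·) (by decide) (by decide)

/-- For `k ≥ 6` the vertices `0, 1, 3, 4` of `C_k` induce the two edges `01` and `34`, whose
complement is the `4`-cycle `0 3 1 4`. -/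
theorem HasInducedCycle.compl_four {k : ℕ} (hk : 6 ≤ k) (hG : G.HasInducedCycle k) :
    Gᶜ.HasInducedCycle 4 := by
  let n : Fin 4 → ℕ := ![0, 3, 1, 4]
  have hn (i : ZMod 4) : n i + 1 < k := by
    have : n i ≤ 4 := (by decide : ∀ i : Fin 4, n i ≤ 4) i
    omega
  refine hG.compl_of_map (by norm_num) (fun i => (n i : ZMod k)) (fun i j hij => ?_)
    (fun i j hij => ?_)
  · exact (by decide : Function.Injective n)
      ((ZMod.natCast_inj_of_lt (Nat.lt_of_succ_lt (hn i)) (Nat.lt_of_succ_lt (hn j))).mp hij)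
  · rw [ZMod.natCast_eq_natCast_add_one_iff (Nat.lt_of_succ_lt (hn i)) (hn j),
      ZMod.natCast_eq_natCast_add_one_iff (Nat.lt_of_succ_lt (hn j)) (hn i)]
    -- `decide` finds no instance for the `ZMod 4` form; `ZMod 4` unfolds to `Fin 4`.
    exact (by decide : ∀ i j : Fin 4, i ≠ j →
      ((n i = n j + 1 ∨ n j = n i + 1) ↔ ¬(i = j + 1 ∨ j = i + 1))) i j hij

end SimpleGraph

/-- If the independence complex of `G` is a quasi-forest, then `G` has no
induced cycle `C_k` for any `k ≥ 5`. -/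
theorem stmt0 {V : Type*} [DecidableEq V] [Fintype V] (G : SimpleGraph V)
    [DecidableRel G.Adj] (hq : (indComplex G).IsQuasiForest) :
    ∀ k : ℕ, 5 ≤ k → ¬ G.HasInducedCycle k := by
  intro k hk hG
  have hchordal {m : ℕ} (hm : 4 ≤ m) : ¬ Gᶜ.HasInducedCycle m :=
    indComplex_oneSkeleton G ▸ hq.not_hasInducedCycle_oneSkeleton hm
  rcases hk.eq_or_lt with rfl | hk
  · exact hchordal (by norm_num) hG.compl_five
  · exact hchordal le_rfl (hG.compl_four hk)
end

section
/- A simplicial complex Δ is a forest if and only if no subcomplex of Δ (generated by a subset of the facets) has a simplicial k-point P_k or a simplicial k-cycle S_k. -/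
open Finset

variable {V : Type*} [DecidableEq V] [Fintype V]

/-!
A forest has no `S_k` and no `P_k` in any `⟨S⟩`: the facets of `S` covering the edges of an
`S_k`, or those containing `t` and all but one vertex of a `P_k`, form a subcollection without a
leaf. Conversely, without `P_k` the complex `⟨S⟩` is the clique complex of its `1`-skeleton, and
without `S_k` this graph is chordal. A chordal graph has a simplicial vertex outside the closed
neighbourhood of any non-universal vertex `a` (Dirac): the neighbours of `a` adjacent to a
component `C` of its non-neighbours form a clique, since otherwise a shortest path through `C`
closes an induced cycle through `a`, and induction applied to `C` together with these neighbours
finds such a vertex in `C`. Finally, for a simplicial vertex `v`, either its maximal clique is a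
leaf, or removing `v` preserves the intersection pattern of the maximal cliques and induction on
the vertex set produces a leaf.
-/

namespace ZMod

theorem eq_add_one_iff_val {k : ℕ} [NeZero k] (hk : k ≠ 1) {i j : ZMod k} :
    i = j + 1 ↔ i.val = j.val + 1 ∨ (i.val = 0 ∧ j.val + 1 = k) := by
  have hi := i.val_lt
  have hj := j.val_lt
  rw [← (val_injective k).eq_iff, val_add, val_one'' hk]
  rcases (show j.val + 1 ≤ k by omega).lt_or_eq with h | h
  · rw [Nat.mod_eq_of_lt h]
    omega
  · rw [h, Nat.mod_self]
    omega

theorem not_triangle_of_four_le {k : ℕ} [NeZero k] (hk : 4 ≤ k) {i j l : ZMod k}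
    (hij : i = j + 1 ∨ j = i + 1) (hjl : j = l + 1 ∨ l = j + 1)
    (hil : i = l + 1 ∨ l = i + 1) : False := by
  simp only [ZMod.eq_add_one_iff_val (show k ≠ 1 by omega)] at hij hjl hil
  omega

end ZMod

theorem List.IsChain.take_append_drop {α : Type*} {r : α → α → Prop} {L : List α}
    (h : L.IsChain r) {i j : ℕ} (hij : i < j) (hj : j < L.length) (hr : r L[i] L[j]) :
    (L.take (i + 1) ++ L.drop j).IsChain r := by
  refine List.isChain_append.mpr ⟨h.take _, h.drop _, fun u hu v hv => ?_⟩
  rw [List.getLast?_take, if_neg (by omega), Nat.add_sub_cancel,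
    List.getElem?_eq_getElem (by omega), Option.some_or, Option.mem_some_iff] at hu
  rw [List.head?_drop, List.getElem?_eq_getElem hj, Option.mem_some_iff] at hv
  exact hu ▸ hv ▸ hr

theorem exists_isLeafOf_of_image {α : Type*} [DecidableEq α] {𝒞 : Finset (Finset α)}
    {ψ : Finset α → Finset α} (hinj : Set.InjOn ψ 𝒞)
    (hψ : ∀ N ∈ 𝒞, ∀ N' ∈ 𝒞, N ≠ N' → ψ N ∩ ψ N' = N ∩ N')
    (h : ∃ L, IsLeafOf (𝒞.image ψ) L) : ∃ F, IsLeafOf 𝒞 F := by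
  obtain ⟨_, hL, hleaf⟩ := h
  obtain ⟨F, hF, rfl⟩ := mem_image.mp hL
  refine ⟨F, hF, ?_⟩
  rcases hleaf with hsingle | ⟨_, hψM, hMF, hbranch⟩
  · refine Or.inl (eq_singleton_iff_unique_mem.mpr ⟨hF, fun N hN => hinj hN hF ?_⟩)
    exact mem_singleton.mp (hsingle ▸ mem_image_of_mem ψ hN)
  · obtain ⟨M, hM, rfl⟩ := mem_image.mp hψM
    have hMF' : M ≠ F := fun h => hMF (h ▸ rfl)
    refine Or.inr ⟨M, hM, hMF', fun N hN hNF => ?_⟩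
    have := hbranch (ψ N) (mem_image_of_mem ψ hN) fun h => hNF (hinj hN hF h)
    rwa [hψ N hN F hF hNF, hψ M hM F hF hMF'] at this

theorem forall_not_isLeafOf_image_of_cycle {α : Type*} [DecidableEq α] {k : ℕ} [NeZero k]
    (hk : 3 ≤ k) {f : ZMod k → α} {M : ZMod k → Finset α} (hMi : ∀ i, f i ∈ M i)
    (hMi1 : ∀ i, f (i + 1) ∈ M i)
    (hin : ∀ i j, f j ∈ M i → j = i ∨ j = i + 1) : ∀ F, ¬ IsLeafOf (univ.image M) F := by
  have hval : ∀ {i j : ZMod k},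
      i = j + 1 ↔ i.val = j.val + 1 ∨ (i.val = 0 ∧ j.val + 1 = k) :=
    ZMod.eq_add_one_iff_val (by omega)
  have hsucc : ∀ i, M (i + 1) ≠ M i := by
    intro i h
    rcases hin i (i + 1 + 1) (h ▸ hMi1 (i + 1)) with h' | h'
    · have := hval.mp h'.symm
      have := hval.mp (rfl : i + 1 = i + 1)
      omega
    · have := hval.mp (add_right_cancel h').symm
      omega
  rintro _ ⟨hF, hsingle | ⟨_, hN, hNF, hbranch⟩⟩
  · obtain ⟨i, -, rfl⟩ := mem_image.mp hF
    exact hsucc i (mem_singleton.mp (hsingle ▸ mem_image_of_mem M (mem_univ (i + 1))))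
  obtain ⟨i, -, rfl⟩ := mem_image.mp hF
  obtain ⟨j, -, rfl⟩ := mem_image.mp hN
  -- `f i` and `f (i + 1)` each lie in a second member besides `M i`, hence in the branch `M j`
  have hprev : f i ∈ M j := by
    have hne : M (i - 1) ≠ M i := by simpa using (hsucc (i - 1)).symm
    have hprev' : f i ∈ M (i - 1) := by simpa using hMi1 (i - 1)
    exact (mem_inter.mp (hbranch _ (mem_image_of_mem M (mem_univ _)) hne
      (mem_inter.mpr ⟨hprev', hMi i⟩))).1
  have hnext : f (i + 1) ∈ M j :=
    (mem_inter.mp (hbranch _ (mem_image_of_mem M (mem_univ _)) (hsucc i)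
      (mem_inter.mpr ⟨hMi (i + 1), hMi1 i⟩))).1
  rcases hin j i hprev with rfl | hij
  · exact hNF rfl
  rcases hin j (i + 1) hnext with h | h
  · have := hval.mp hij
    have := hval.mp h.symm
    omega
  · have := hval.mp ((add_right_cancel h).symm.trans hij)
    omega

namespace SimpleGraph

variable {α : Type*} {G : SimpleGraph α}

def IsChordal (G : SimpleGraph α) : Prop :=
  ∀ k, 4 ≤ k → ¬ G.HasInducedCycle k

def IsInducedPath (G : SimpleGraph α) (P : List α) : Prop :=
  P.Nodup ∧ ∀ i j (hi : i < P.length) (hj : j < P.length),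
    G.Adj P[i] P[j] ↔ j = i + 1 ∨ i = j + 1

theorem IsInducedPath.hasInducedCycle_cons {P : List α} (hP : G.IsInducedPath P)
    (hlen : 3 ≤ P.length) {a : α} (ha : a ∉ P)
    (hadj : ∀ i (hi : i < P.length), G.Adj a P[i] ↔ i = 0 ∨ i + 1 = P.length) :
    G.HasInducedCycle (P.length + 1) := by
  have hnd : (a :: P).Nodup := List.nodup_cons.mpr ⟨ha, hP.1⟩
  have key : ∀ m n (hm : m < P.length + 1) (hn : n < P.length + 1),
      G.Adj (a :: P)[m] (a :: P)[n] ↔ (m = n + 1 ∨ m = 0 ∧ n + 1 = P.length + 1) ∨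
        (n = m + 1 ∨ n = 0 ∧ m + 1 = P.length + 1) := by
    rintro (_ | m) (_ | n) hm hn
    · simp only [List.getElem_cons_zero, SimpleGraph.irrefl, false_iff]
      omega
    · rw [List.getElem_cons_zero, List.getElem_cons_succ, hadj n (by omega)]
      omega
    · rw [List.getElem_cons_zero, List.getElem_cons_succ, G.adj_comm, hadj m (by omega)]
      omega
    · rw [List.getElem_cons_succ, List.getElem_cons_succ, hP.2 m n (by omega) (by omega)]
      omega
  refine ⟨by omega, fun i => (a :: P)[i.val]'(by simpa using i.val_lt), ?_, ?_⟩
  · intro i j hij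
    exact ZMod.val_injective _ ((hnd.getElem_inj_iff).mp hij)
  · intro i j
    rw [ZMod.eq_add_one_iff_val (by omega), ZMod.eq_add_one_iff_val (by omega)]
    exact key _ _ _ _

theorem exists_isInducedPath {W : Set α} {x y : α} (hxy : x ≠ y) (hnadj : ¬ G.Adj x y)
    {M₀ : List α} (hM₀W : ∀ v ∈ M₀, v ∈ W)
    (hM₀ : (x :: M₀ ++ [y]).IsChain G.Adj) :
    ∃ M : List α, M ≠ [] ∧ (∀ v ∈ M, v ∈ W) ∧ G.IsInducedPath (x :: M ++ [y]) := by
  obtain ⟨M, ⟨hMW, hMc⟩, hmin⟩ := (measure List.length).wf.has_min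
    {M | (∀ v ∈ M, v ∈ W) ∧ (x :: M ++ [y]).IsChain G.Adj} ⟨M₀, hM₀W, hM₀⟩
  set P := x :: M ++ [y] with hP
  have hlen : P.length = M.length + 2 := by simp [hP]
  have hconsec : ∀ i (hi : i + 1 < P.length), G.Adj P[i] P[i + 1] :=
    List.isChain_iff_getElem.mp hMc
  -- a chord would splice out part of `M`, giving a shorter walk
  have hchord : ∀ i j (hi : i < P.length) (hj : j < P.length), i + 1 < j →
      ¬ G.Adj P[i] P[j] := by
    intro i j hi hj hij hadj
    obtain ⟨j, rfl⟩ : ∃ j', j = j' + 1 := ⟨j - 1, by omega⟩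
    have hsplice : P.take (i + 1) ++ P.drop (j + 1) = x :: (M.take i ++ M.drop j) ++ [y] := by
      rw [hP, List.take_append_of_le_length (by simp; omega),
        List.drop_append_of_le_length (by simp; omega), List.take_succ_cons, List.drop_succ_cons]
      simp
    refine hmin (M.take i ++ M.drop j)
      ⟨fun v hv => ?_, hsplice ▸ hMc.take_append_drop (by omega) hj hadj⟩ ?_
    · rcases List.mem_append.mp hv with hv | hv
      exacts [hMW v (List.mem_of_mem_take hv), hMW v (List.mem_of_mem_drop hv)]
    · show (M.take i ++ M.drop j).length < M.length
      simp only [List.length_append, List.length_take, List.length_drop]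
      omega
  have hnodup : P.Nodup := by
    rw [List.nodup_iff_pairwise_ne, List.pairwise_iff_getElem]
    intro i j hi hj hij heq
    rcases Nat.lt_or_ge (j + 1) P.length with hj1 | hj1
    · exact hchord i (j + 1) hi hj1 (by omega) (heq ▸ hconsec j hj1)
    · obtain _ | i := i
      · obtain rfl : j = M.length + 1 := by omega
        exact hxy (by simpa [hP] using heq)
      · exact hchord i j (by omega) hj (by omega) (heq ▸ hconsec i hi)
  refine ⟨M, ?_, hMW, hnodup, fun i j hi hj => ⟨fun hadj => ?_, ?_⟩⟩
  · rintro rfl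
    exact hnadj (List.isChain_pair.mp hMc)
  · by_contra hne
    rcases Nat.lt_trichotomy i j with hij | rfl | hij
    · exact hchord i j hi hj (by omega) hadj
    · exact G.loopless.irrefl _ hadj
    · exact hchord j i hj hi (by omega) hadj.symm
  · rintro (rfl | rfl)
    exacts [hconsec i hj, (hconsec j hi).symm]

def IsSimplicialIn (G : SimpleGraph α) (U : Finset α) (v : α) : Prop :=
  G.IsClique {w | w ∈ U ∧ G.Adj v w}

theorem IsClique.isSimplicialIn {U : Finset α} (h : G.IsClique (U : Set α)) (v : α) :
    G.IsSimplicialIn U v :=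
  h.subset fun _ hw => hw.1

theorem IsSimplicialIn.mono {U U' : Finset α} {v : α} (h : G.IsSimplicialIn U' v)
    (hU : ∀ w ∈ U, G.Adj v w → w ∈ U') : G.IsSimplicialIn U v :=
  IsClique.subset (s := {w | w ∈ U' ∧ G.Adj v w}) (fun w hw => ⟨hU w hw.1 hw.2, hw.2⟩) h

theorem exists_isChain_of_reachable {W : Set α} {c d x y : α}
    (h : ((⊤ : G.Subgraph).induce W).spanningCoe.Reachable c d) (hc : c ∈ W)
    (hx : G.Adj x c) (hy : G.Adj d y) :
    ∃ M : List α, (∀ v ∈ M, v ∈ W) ∧ (x :: M ++ [y]).IsChain G.Adj := by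
  obtain ⟨p⟩ := h
  induction p generalizing x with
  | nil => exact ⟨[_], by simpa using hc, by simp [hx, hy]⟩
  | cons hcc' _ ih =>
    obtain ⟨-, hc'W, hadj⟩ : _ ∈ W ∧ _ ∈ W ∧ G.Adj _ _ := by simpa using hcc'
    obtain ⟨M, hMW, hM⟩ := ih hc'W hadj hy
    exact ⟨_ :: M, by simpa [hc] using hMW, List.isChain_cons_cons.mpr ⟨hx, hM⟩⟩

theorem IsChordal.adj_of_reachable (hG : G.IsChordal) {W : Set α} {a x y c d : α}
    (hW : ∀ w ∈ W, ¬ G.Adj a w) (haW : a ∉ W) (hax : G.Adj a x) (hay : G.Adj a y)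
    (hxy : x ≠ y) (hcd : ((⊤ : G.Subgraph).induce W).spanningCoe.Reachable c d) (hc : c ∈ W)
    (hxc : G.Adj x c) (hdy : G.Adj d y) : G.Adj x y := by
  -- otherwise a shortest `x`–`y` path through `W` closes an induced cycle through `a`
  by_contra hnxy
  obtain ⟨M₀, hM₀W, hM₀⟩ := exists_isChain_of_reachable hcd hc hxc hdy
  obtain ⟨M, hM, hMW, hP⟩ := exists_isInducedPath hxy hnxy hM₀W hM₀
  have hlen : 3 ≤ (x :: M ++ [y]).length := by
    simpa [Nat.one_le_iff_ne_zero] using hM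
  refine hG _ (by omega) (hP.hasInducedCycle_cons hlen (a := a) ?_ fun i hi => ?_)
  · simpa [G.ne_of_adj hax, G.ne_of_adj hay] using fun haM => haW (hMW a haM)
  · obtain _ | i := i
    · simpa using hax
    rcases (show i ≤ M.length by simp at hi; omega).lt_or_eq with hiM | rfl
    · rw [List.getElem_append_left (by simpa using hiM), List.getElem_cons_succ]
      simpa [hiM.ne] using hW _ (hMW _ (List.getElem_mem hiM))
    · simpa using hay

theorem IsChordal.exists_isSimplicialIn_not_adj (hG : G.IsChordal) (U : Finset α) :
    ∀ a ∈ U, ∀ b ∈ U, b ≠ a → ¬ G.Adj a b →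
      ∃ v ∈ U, v ≠ a ∧ ¬ G.Adj a v ∧ G.IsSimplicialIn U v := by
  classical
  induction U using Finset.strongInduction with | H U ih => ?_
  intro a ha b hb hba hab
  set W : Set α := {w | w ∈ U ∧ w ≠ a ∧ ¬ G.Adj a w}
  set H := ((⊤ : G.Subgraph).induce W).spanningCoe
  have hH : ∀ {u w}, H.Adj u w ↔ u ∈ W ∧ w ∈ W ∧ G.Adj u w := by simp [H]
  set C := U.filter (fun c => c ∈ W ∧ H.Reachable b c)
  set X := U.filter (fun x => G.Adj a x ∧ ∃ c ∈ C, G.Adj c x)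
  have hCW : ∀ {c}, c ∈ C → c ∈ W := fun hc => (mem_filter.mp hc).2.1
  have hbC : b ∈ C := mem_filter.mpr ⟨hb, ⟨hb, hba, hab⟩, .refl b⟩
  have hU' : C ∪ X ⊂ U := by
    refine ssubset_iff_of_subset (union_subset (filter_subset _ _) (filter_subset _ _)) |>.mpr
      ⟨a, ha, fun haCX => ?_⟩
    rcases mem_union.mp haCX with haC | haX
    · exact (hCW haC).2.1 rfl
    · exact G.loopless.irrefl a (mem_filter.mp haX).2.1
  have hnbr : ∀ {c u}, c ∈ C → u ∈ U → G.Adj c u → u ∈ C ∪ X := by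
    intro c u hc hu hcu
    by_cases hau : G.Adj a u
    · exact mem_union_right _ (mem_filter.mpr ⟨hu, hau, c, hc, hcu⟩)
    · have huW : u ∈ W := ⟨hu, fun hua => (hCW hc).2.2 (hua ▸ hcu.symm), hau⟩
      have hbu : H.Reachable b u :=
        (mem_filter.mp hc).2.2.trans (hH.mpr ⟨hCW hc, huW, hcu⟩).reachable
      exact mem_union_left _ (mem_filter.mpr ⟨hu, huW, hbu⟩)
  have hlift : ∀ {c}, c ∈ C → G.IsSimplicialIn (C ∪ X) c → G.IsSimplicialIn U c :=
    fun hc h => h.mono fun _ hw hcw => hnbr hc hw hcw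
  have hX : G.IsClique (X : Set α) := by
    intro x hx y hy hxy
    obtain ⟨-, hax, c, hc, hcx⟩ := mem_filter.mp (mem_coe.mp hx)
    obtain ⟨-, hay, d, hd, hdy⟩ := mem_filter.mp (mem_coe.mp hy)
    exact hG.adj_of_reachable (fun w hw => hw.2.2) (fun haW => haW.2.1 rfl) hax hay hxy
      ((mem_filter.mp hc).2.2.symm.trans (mem_filter.mp hd).2.2) (hCW hc) hcx.symm hdy
  have hsimpC : ∃ v ∈ C, G.IsSimplicialIn (C ∪ X) v := by
    by_cases hcl : G.IsClique ((C ∪ X : Finset α) : Set α)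
    · exact ⟨b, hbC, hcl.isSimplicialIn b⟩
    obtain ⟨p, hp, q, hq, hpq, hnpq⟩ :
        ∃ p ∈ C ∪ X, ∃ q ∈ C ∪ X, p ≠ q ∧ ¬ G.Adj p q := by
      simpa [IsClique, Set.Pairwise] using hcl
    obtain ⟨v, hv, hvp, hpv, hsv⟩ := ih _ hU' p hp q hq hpq.symm hnpq
    rcases mem_union.mp hv with hvC | hvX
    · exact ⟨v, hvC, hsv⟩
    -- `v ∈ X` has the non-neighbour `p`; a simplicial vertex off `N[v]` avoids the clique `X`
    obtain ⟨w, hw, hwv, hvw, hsw⟩ := ih _ hU' v hv p hp hvp.symm (fun h => hpv h.symm)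
    exact ⟨w, (mem_union.mp hw).resolve_right fun hwX => hvw (hX hvX hwX hwv.symm), hsw⟩
  obtain ⟨v, hvC, hsv⟩ := hsimpC
  exact ⟨v, (hCW hvC).1, (hCW hvC).2.1, (hCW hvC).2.2, hlift hvC hsv⟩

theorem IsChordal.exists_isSimplicialIn (hG : G.IsChordal) {U : Finset α} (hU : U.Nonempty) :
    ∃ v ∈ U, G.IsSimplicialIn U v := by
  by_cases hcl : G.IsClique (U : Set α)
  · obtain ⟨u, hu⟩ := hU
    exact ⟨u, hu, hcl.isSimplicialIn u⟩
  obtain ⟨a, ha, b, hb, hab, hnab⟩ : ∃ a ∈ U, ∃ b ∈ U, a ≠ b ∧ ¬ G.Adj a b := by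
    simpa [IsClique, Set.Pairwise] using hcl
  obtain ⟨v, hv, -, -, hsv⟩ := hG.exists_isSimplicialIn_not_adj U a ha b hb hab.symm hnab
  exact ⟨v, hv, hsv⟩

open scoped Classical in
noncomputable def maxCliquesIn (G : SimpleGraph α) (U : Finset α) : Finset (Finset α) :=
  U.powerset.filter (Maximal fun D : Finset α => D ⊆ U ∧ G.IsClique (D : Set α))

theorem mem_maxCliquesIn {U C : Finset α} :
    C ∈ G.maxCliquesIn U ↔
      Maximal (fun D : Finset α => D ⊆ U ∧ G.IsClique (D : Set α)) C := by
  classical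
  simpa [maxCliquesIn] using fun h => h.1.1

theorem exists_mem_maxCliquesIn_superset {U D : Finset α} (hDU : D ⊆ U)
    (hD : G.IsClique (D : Set α)) : ∃ M ∈ G.maxCliquesIn U, D ⊆ M := by
  have hfin : {D : Finset α | D ⊆ U ∧ G.IsClique (D : Set α)}.Finite :=
    U.powerset.finite_toSet.subset fun D hD => mem_powerset.mpr hD.1
  obtain ⟨M, hDM, hM⟩ := hfin.exists_le_maximal ⟨hDU, hD⟩
  exact ⟨M, mem_maxCliquesIn.mpr hM, hDM⟩

theorem maxCliquesIn_erase [DecidableEq α] {U : Finset α} {v : α}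
    (hkey : ∀ N ∈ G.maxCliquesIn U, ∀ M ∈ G.maxCliquesIn U, N.erase v ⊆ M → N = M) :
    G.maxCliquesIn (U.erase v) = (G.maxCliquesIn U).image (·.erase v) := by
  have hnotv : ∀ {D}, D ⊆ U.erase v → v ∉ D := fun hD h => (mem_erase.mp (hD h)).1 rfl
  ext D
  rw [mem_image]
  constructor
  · intro hD
    have hD' := mem_maxCliquesIn.mp hD
    obtain ⟨M, hM, hDM⟩ :=
      exists_mem_maxCliquesIn_superset (hD'.1.1.trans (erase_subset v U)) hD'.1.2
    have hM' := mem_maxCliquesIn.mp hM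
    refine ⟨M, hM, (hD'.eq_of_le ⟨erase_subset_erase v hM'.1.1, ?_⟩ ?_).symm⟩
    · exact hM'.1.2.subset (coe_subset.mpr (erase_subset v M))
    · exact subset_erase.mpr ⟨hDM, hnotv hD'.1.1⟩
  · rintro ⟨N, hN, rfl⟩
    have hN' := mem_maxCliquesIn.mp hN
    refine mem_maxCliquesIn.mpr ⟨⟨erase_subset_erase v hN'.1.1, ?_⟩, fun D hD hND => ?_⟩
    · exact hN'.1.2.subset (coe_subset.mpr (erase_subset v N))
    obtain ⟨M, hM, hDM⟩ := exists_mem_maxCliquesIn_superset (hD.1.trans (erase_subset v U)) hD.2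
    obtain rfl := hkey N hN M hM (hND.trans hDM)
    exact subset_erase.mpr ⟨hDM, hnotv hD.1⟩

theorem maxCliquesIn_empty : G.maxCliquesIn ∅ = {∅} := by
  have hempty : ∅ ∈ G.maxCliquesIn ∅ :=
    mem_maxCliquesIn.mpr ⟨⟨subset_rfl, by simp⟩, fun D hD _ => hD.1⟩
  exact eq_singleton_iff_unique_mem.mpr
    ⟨hempty, fun C hC => subset_empty.mp (mem_maxCliquesIn.mp hC).1.1⟩

theorem IsSimplicialIn.exists_maxCliquesIn [DecidableEq α] {U : Finset α} {v : α} (hvU : v ∈ U)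
    (hv : G.IsSimplicialIn U v) :
    ∃ F ∈ G.maxCliquesIn U, ∀ N ∈ G.maxCliquesIn U, v ∈ N ↔ N = F := by
  classical
  set F := insert v (U.filter (G.Adj v))
  have hsubF : ∀ D ⊆ U, G.IsClique (D : Set α) → v ∈ D → D ⊆ F := by
    intro D hDU hD hvD d hd
    by_cases hdv : d = v
    · exact hdv ▸ mem_insert_self v _
    · exact mem_insert_of_mem (mem_filter.mpr ⟨hDU hd, hD hvD hd (Ne.symm hdv)⟩)
  have hFcl : G.IsClique (F : Set α) := by
    rw [coe_insert, coe_filter]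
    exact IsClique.insert hv fun w hw _ => hw.2
  have hF : F ∈ G.maxCliquesIn U :=
    mem_maxCliquesIn.mpr ⟨⟨insert_subset hvU (filter_subset _ _), hFcl⟩,
      fun D hD hFD => hsubF D hD.1 hD.2 (hFD (mem_insert_self v _))⟩
  refine ⟨F, hF, fun N hN => ⟨fun hvN => ?_, fun h => h ▸ mem_insert_self v _⟩⟩
  have hN := mem_maxCliquesIn.mp hN
  exact hN.eq_of_le (mem_maxCliquesIn.mp hF).1 (hsubF N hN.1.1 hN.1.2 hvN)

theorem IsChordal.exists_isLeafOf_maxCliquesIn [DecidableEq α] (hG : G.IsChordal)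
    (U : Finset α) : ∃ F, IsLeafOf (G.maxCliquesIn U) F := by
  induction U using Finset.strongInduction with | H U ih => ?_
  rcases U.eq_empty_or_nonempty with rfl | hU
  · exact ⟨∅, by simp [maxCliquesIn_empty, IsLeafOf]⟩
  obtain ⟨v, hvU, hv⟩ := hG.exists_isSimplicialIn hU
  obtain ⟨F, hF, hvF⟩ := hv.exists_maxCliquesIn hvU
  set K := G.maxCliquesIn U
  -- Either `F` is a leaf, or deleting `v` maps the maximal cliques bijectively onto those of
  -- `U.erase v` without changing pairwise intersections, and a leaf there pulls back.
  by_cases hbranch : ∃ M ∈ K, M ≠ F ∧ F.erase v ⊆ M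
  · obtain ⟨M, hM, hMF, hFM⟩ := hbranch
    refine ⟨F, hF, Or.inr ⟨M, hM, hMF, fun N hN hNF w hw => ?_⟩⟩
    obtain ⟨hwN, hwF⟩ := mem_inter.mp hw
    have hwv : w ≠ v := fun h => hNF ((hvF N hN).mp (h ▸ hwN))
    exact mem_inter.mpr ⟨hFM (mem_erase.mpr ⟨hwv, hwF⟩), hwF⟩
  push Not at hbranch
  have hkey : ∀ N ∈ K, ∀ M ∈ K, N.erase v ⊆ M → N = M := by
    intro N hN M hM hNM
    by_cases hvN : v ∈ N
    · obtain rfl := (hvF N hN).mp hvN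
      by_contra hNM'
      exact hbranch M hM (Ne.symm hNM') hNM
    · rw [erase_eq_of_notMem hvN] at hNM
      exact (mem_maxCliquesIn.mp hN).eq_of_le (mem_maxCliquesIn.mp hM).1 hNM
  refine exists_isLeafOf_of_image
    (fun N hN N' hN' h => hkey N hN N' hN' (le_trans h.le (erase_subset v N')))
    (fun N hN N' hN' hNN' => ?_) (maxCliquesIn_erase hkey ▸ ih _ (erase_ssubset hvU))
  have hvNN' : v ∉ N ∩ N' := fun h =>
    hNN' (((hvF N hN).mp (mem_inter.mp h).1).trans ((hvF N' hN').mp (mem_inter.mp h).2).symm)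
  rw [← erase_eq_of_notMem hvNN']
  ext w
  simp only [mem_inter, mem_erase]
  tauto

end SimpleGraph

namespace SimplicialComplex

theorem mem_genBy_faces {S : Finset (Finset V)} {A : Finset V} :
    A ∈ (genBy S).faces ↔ ∃ F ∈ S, A ⊆ F := by
  simp [genBy]

theorem oneSkeleton_genBy_adj {S : Finset (Finset V)} {a b : V} :
    (genBy S).oneSkeleton.Adj a b ↔ a ≠ b ∧ ∃ F ∈ S, a ∈ F ∧ b ∈ F := by
  simp [oneSkeleton, mem_genBy_faces, insert_subset_iff]

theorem facetSet_subset_faces (Δ : SimplicialComplex V) : Δ.facetSet ⊆ Δ.faces :=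
  filter_subset _ _

theorem isAntichain_of_subset_facetSet {Δ : SimplicialComplex V} {S : Finset (Finset V)}
    (hS : S ⊆ Δ.facetSet) : IsAntichain (· ⊆ ·) (S : Set (Finset V)) := by
  intro F hF G hG hFG hsub
  exact hFG ((mem_filter.mp (hS hF)).2 G (Δ.facetSet_subset_faces (hS hG)) hsub)

theorem subset_facetSet_genBy {S : Finset (Finset V)}
    (hS : IsAntichain (· ⊆ ·) (S : Set (Finset V))) : S ⊆ (genBy S).facetSet := by
  intro F hF
  refine mem_filter.mpr ⟨mem_genBy_faces.mpr ⟨F, hF, subset_rfl⟩, fun G hG hFG => ?_⟩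
  obtain ⟨F', hF', hGF'⟩ := mem_genBy_faces.mp hG
  obtain rfl : F = F' := hS.eq hF hF' (hFG.trans hGF')
  exact hFG.antisymm hGF'

theorem exists_leafless_subset_of_hasSk {S : Finset (Finset V)}
    (hS : IsAntichain (· ⊆ ·) (S : Set (Finset V))) {k : ℕ} (h : (genBy S).HasSk k) :
    ∃ T ⊆ S, T.Nonempty ∧ ∀ F, ¬ IsLeafOf T F := by
  obtain ⟨hk, f, -, hadj, hfac⟩ := h
  have : NeZero k := ⟨by omega⟩
  have hedge : ∀ i, ∃ M ∈ S, f i ∈ M ∧ f (i + 1) ∈ M := by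
    intro i
    obtain ⟨-, M, hM, hiM, hi1M⟩ := oneSkeleton_genBy_adj.mp ((hadj i (i + 1)).mpr (Or.inr rfl))
    exact ⟨M, hM, hiM, hi1M⟩
  choose M hMS hMi hMi1 using hedge
  have hin : ∀ i j, f j ∈ M i → j = i ∨ j = i + 1 := by
    intro i j hj
    rcases hfac _ (subset_facetSet_genBy hS (hMS i)) i (i + 1) j (hMi i) (hMi1 i) hj with h | h | h
    · have := (ZMod.eq_add_one_iff_val (by omega)).mp h
      omega
    · exact Or.inl h.symm
    · exact Or.inr h.symm
  refine ⟨univ.image M, fun _ hF => ?_, ⟨M 0, mem_image_of_mem M (mem_univ 0)⟩,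
    forall_not_isLeafOf_image_of_cycle hk hMi hMi1 hin⟩
  obtain ⟨i, -, rfl⟩ := mem_image.mp hF
  exact hMS i

theorem exists_leafless_subset_of_hasPkAux {S : Finset (Finset V)} {k : ℕ} (hk : 3 ≤ k)
    (h : (genBy S).HasPkAux k) : ∃ T ⊆ S, T.Nonempty ∧ ∀ F, ¬ IsLeafOf T F := by
  obtain ⟨t, J, -, hcard, hfaces, hnot⟩ := h
  choose! M hMS hMsub using fun j hj => mem_genBy_faces.mp (hfaces j hj)
  have hmem : ∀ j ∈ J, ∀ j' ∈ J, j' ∈ M j ↔ j' ≠ j := by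
    intro j hj j' hj'
    refine ⟨fun hj'M hjj' => hnot (mem_genBy_faces.mpr ⟨M j, hMS j hj, fun x hx => ?_⟩),
      fun hjj' => hMsub j hj (mem_insert_of_mem (mem_erase.mpr ⟨hjj', hj'⟩))⟩
    by_cases hxj : x = j
    · rw [hxj]
      rwa [hjj'] at hj'M
    · exact hMsub j hj (by simp_all)
  have hself : ∀ j ∈ J, j ∉ M j := fun j hj hjM => (hmem j hj j hj).mp hjM rfl
  have hne : ∀ j ∈ J, ∀ j' ∈ J, j' ≠ j → M j' ≠ M j := fun j hj j' hj' hjj' h =>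
    hself j' hj' (h ▸ (hmem j hj j' hj').mpr hjj')
  refine ⟨J.image M, fun _ hF => ?_, ?_, ?_⟩
  · obtain ⟨j, hj, rfl⟩ := mem_image.mp hF
    exact hMS j hj
  · exact (card_pos.mp (by omega)).image M
  rintro _ ⟨hF, hsingle | ⟨_, hN, hNF, hbranch⟩⟩
  · obtain ⟨j, hj, rfl⟩ := mem_image.mp hF
    obtain ⟨j', hj', hj'j⟩ := exists_mem_ne (s := J) (by omega) j
    exact hne j hj j' hj' hj'j (mem_singleton.mp (hsingle ▸ mem_image_of_mem M hj'))
  obtain ⟨j, hj, rfl⟩ := mem_image.mp hF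
  obtain ⟨j', hj', rfl⟩ := mem_image.mp hN
  have hj'j : j' ≠ j := fun h => hNF (h ▸ rfl)
  obtain ⟨j'', hj'', hj''j'⟩ :=
    exists_mem_ne (s := J.erase j) (by rw [card_erase_of_mem hj]; omega) j'
  obtain ⟨hj''j, hj''⟩ := mem_erase.mp hj''
  have := hbranch (M j'') (mem_image_of_mem M hj'') (hne j hj j'' hj'' hj''j)
    (mem_inter.mpr ⟨(hmem j'' hj'' j' hj').mpr hj''j'.symm, (hmem j hj j' hj').mpr hj'j⟩)
  exact hself j' hj' (mem_inter.mp this).1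

theorem hasPk_of_minimal_nonface (Δ : SimplicialComplex V) {C : Finset V} (hC : C ∉ Δ.faces)
    (hsub : ∀ D ⊂ C, D ∈ Δ.faces) (hcard : 3 ≤ C.card) : Δ.HasPk (C.card - 1) := by
  rcases hcard.lt_or_eq with hcard | hcard
  · rw [HasPk, if_neg (by omega)]
    obtain ⟨t, ht⟩ := card_pos.mp (by omega : 0 < C.card)
    refine ⟨t, C.erase t, notMem_erase t C, by rw [card_erase_of_mem ht], fun j hj => ?_, ?_⟩
    · rw [erase_right_comm, insert_erase (mem_erase.mpr ⟨(ne_of_mem_erase hj).symm, ht⟩)]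
      exact hsub _ (erase_ssubset (mem_of_mem_erase hj))
    · rwa [insert_erase ht]
  rw [← hcard, HasPk, if_pos rfl]
  let e := C.equivFinOfCardEq hcard.symm
  let f : ZMod 3 → V := fun i => e.symm i
  have hf : Function.Injective f := Subtype.val_injective.comp e.symm.injective
  refine ⟨le_rfl, f, hf, fun i j => ?_, fun F hF i j l hi hj hl => ?_⟩
  · have hface : {f i, f j} ∈ Δ.faces := hsub _ <| ssubset_of_subset_of_ne
      (by simp [insert_subset_iff, f]) fun h => by
        have := card_le_two (a := f i) (b := f j)
        rw [h] at this
        omega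
    have hcyc : ∀ i j : ZMod 3, (i = j + 1 ∨ j = i + 1) ↔ i ≠ j := by decide
    rw [hcyc, ← hf.ne_iff]
    exact ⟨fun h => h.1, fun h => ⟨h, hface⟩⟩
  · by_contra hne
    have hcover : ∀ i j l m : ZMod 3, i ≠ j → i ≠ l → j ≠ l → m = i ∨ m = j ∨ m = l := by decide
    refine hC (Δ.down_closed F (Δ.facetSet_subset_faces hF) C fun c hc => ?_)
    obtain ⟨hij, hil, hjl⟩ : i ≠ j ∧ i ≠ l ∧ j ≠ l := by tauto
    have hcf : c = f (e ⟨c, hc⟩) := by simp [f]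
    rcases hcover i j l (e ⟨c, hc⟩) hij hil hjl with h | h | h <;> rw [hcf, h] <;> assumption

theorem mem_faces_of_forall_card_le_two {Δ : SimplicialComplex V}
    (hP : ∀ k, 2 ≤ k → ¬ Δ.HasPk k) {C : Finset V}
    (hC : ∀ D ⊆ C, D.card ≤ 2 → D ∈ Δ.faces) : C ∈ Δ.faces := by
  induction C using Finset.strongInduction with | H C ih => ?_
  by_cases hcard : C.card ≤ 2
  · exact hC C subset_rfl hcard
  by_contra hCf
  refine hP _ (by omega) (Δ.hasPk_of_minimal_nonface hCf (fun D hD => ?_) (by omega))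
  exact ih D hD fun D' hD' => hC D' (hD'.trans hD.subset)

theorem isChordal_oneSkeleton {Δ : SimplicialComplex V} (hS : ∀ k, 4 ≤ k → ¬ Δ.HasSk k) :
    Δ.oneSkeleton.IsChordal := by
  rintro k hk ⟨-, f, hf, hadj⟩
  have : NeZero k := ⟨by omega⟩
  refine hS k hk ⟨by omega, f, hf, hadj, fun F hF i j l hi hj hl => ?_⟩
  by_contra hne
  have hpair : ∀ {p q}, p ∈ F → q ∈ F → p ≠ q → Δ.oneSkeleton.Adj p q := fun hp hq hpq =>
    ⟨hpq, Δ.down_closed F (Δ.facetSet_subset_faces hF) _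
      (insert_subset hp (singleton_subset_iff.mpr hq))⟩
  exact ZMod.not_triangle_of_four_le hk ((hadj i j).mp (hpair hi hj (hf.ne (by tauto))))
    ((hadj j l).mp (hpair hj hl (hf.ne (by tauto))))
    ((hadj i l).mp (hpair hi hl (hf.ne (by tauto))))

theorem maxCliquesIn_oneSkeleton_genBy {S : Finset (Finset V)}
    (hS : IsAntichain (· ⊆ ·) (S : Set (Finset V))) (hSne : S.Nonempty)
    (hP : ∀ k, 2 ≤ k → ¬ (genBy S).HasPk k) :
    (genBy S).oneSkeleton.maxCliquesIn (S.sup id) = S := by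
  have hface : ∀ C ⊆ S.sup id, (genBy S).oneSkeleton.IsClique (C : Set V) →
      C ∈ (genBy S).faces := by
    intro C hCU hC
    refine mem_faces_of_forall_card_le_two hP fun D hDC hD => ?_
    rcases (show D.card = 0 ∨ D.card = 1 ∨ D.card = 2 by omega) with h | h | h
    · obtain ⟨F, hF⟩ := hSne
      exact mem_genBy_faces.mpr ⟨F, hF, card_eq_zero.mp h ▸ empty_subset F⟩
    · obtain ⟨v, rfl⟩ := card_eq_one.mp h
      obtain ⟨F, hF, hvF⟩ := mem_sup.mp (hCU (hDC (mem_singleton_self v)))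
      exact mem_genBy_faces.mpr ⟨F, hF, singleton_subset_iff.mpr hvF⟩
    · obtain ⟨a, b, hab, rfl⟩ := card_eq_two.mp h
      exact (hC (hDC (mem_insert_self a {b})) (hDC (by simp)) hab).2
  have hclique : ∀ F ∈ S, F ⊆ S.sup id ∧ (genBy S).oneSkeleton.IsClique (F : Set V) :=
    fun F hF => ⟨le_sup (f := id) hF,
      fun a ha b hb hab => oneSkeleton_genBy_adj.mpr ⟨hab, F, hF, ha, hb⟩⟩
  ext C
  rw [SimpleGraph.mem_maxCliquesIn]
  constructor
  · intro hC
    obtain ⟨F, hF, hCF⟩ := mem_genBy_faces.mp (hface C hC.1.1 hC.1.2)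
    exact hC.eq_of_le (hclique F hF) hCF ▸ hF
  · intro hC
    refine ⟨hclique C hC, fun D hD hCD => ?_⟩
    obtain ⟨F, hF, hDF⟩ := mem_genBy_faces.mp (hface D hD.1 hD.2)
    exact hS.eq hC hF (hCD.trans hDF) ▸ hDF

theorem IsForest.not_exists_leafless_subset {Δ : SimplicialComplex V} (hΔ : Δ.IsForest)
    {S : Finset (Finset V)} (hS : S ⊆ Δ.facetSet) :
    ¬ ∃ T ⊆ S, T.Nonempty ∧ ∀ F, ¬ IsLeafOf T F := by
  rintro ⟨T, hTS, hTne, hT⟩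
  obtain ⟨F, hF⟩ := hΔ T (hTS.trans hS) hTne
  exact hT F hF

theorem IsForest.not_hasSk_genBy {Δ : SimplicialComplex V} (hΔ : Δ.IsForest)
    {S : Finset (Finset V)} (hS : S ⊆ Δ.facetSet) (k : ℕ) : ¬ (genBy S).HasSk k := fun h =>
  hΔ.not_exists_leafless_subset hS
    (exists_leafless_subset_of_hasSk (isAntichain_of_subset_facetSet hS) h)

theorem IsForest.not_hasPk_genBy {Δ : SimplicialComplex V} (hΔ : Δ.IsForest)
    {S : Finset (Finset V)} (hS : S ⊆ Δ.facetSet) {k : ℕ} (hk : 2 ≤ k) :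
    ¬ (genBy S).HasPk k := by
  unfold HasPk
  split_ifs with hk2
  · exact hΔ.not_hasSk_genBy hS 3
  · exact fun h =>
      hΔ.not_exists_leafless_subset hS (exists_leafless_subset_of_hasPkAux (by omega) h)

theorem exists_isLeafOf_of_not_hasPk_of_not_hasSk {S : Finset (Finset V)}
    (hS : IsAntichain (· ⊆ ·) (S : Set (Finset V))) (hSne : S.Nonempty)
    (hP : ∀ k, 2 ≤ k → ¬ (genBy S).HasPk k) (hSk : ∀ k, 3 ≤ k → ¬ (genBy S).HasSk k) :
    ∃ F, IsLeafOf S F := by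
  rw [← maxCliquesIn_oneSkeleton_genBy hS hSne hP]
  exact (isChordal_oneSkeleton fun k hk => hSk k (by omega)).exists_isLeafOf_maxCliquesIn _

end SimplicialComplex

/-- A simplicial complex is a forest iff no subcomplex generated by a
(nonempty) subset of its facets has a `P_k` or an `S_k`. -/
theorem stmt4 {V : Type*} [DecidableEq V] [Fintype V] (Δ : SimplicialComplex V) :
    Δ.IsForest ↔
      ∀ S ⊆ Δ.facetSet, S.Nonempty →
        (∀ k : ℕ, 2 ≤ k → ¬ (genBy S).HasPk k) ∧
        (∀ k : ℕ, 3 ≤ k → ¬ (genBy S).HasSk k) := by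
  constructor
  · intro hΔ S hS _
    exact ⟨fun k hk => hΔ.not_hasPk_genBy hS hk, fun k _ => hΔ.not_hasSk_genBy hS k⟩
  · intro h S hS hSne
    obtain ⟨hP, hSk⟩ := h S hS hSne
    exact SimplicialComplex.exists_isLeafOf_of_not_hasPk_of_not_hasSk
      (SimplicialComplex.isAntichain_of_subset_facetSet hS) hSne hP hSk
end

section
/- If Δ is a quasi-forest simplicial complex arising as the independence complex of a graph G, and G has no induced 4-cycle, then Ind(G) is vertex decomposable. -/
open Finset

variable {V : Type*} [DecidableEq V] [Fintype V]

/-- Deletion of a vertex. -/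
def SimplicialComplex.delete (Δ : SimplicialComplex V) (v : V) :
    SimplicialComplex V where
  faces := Δ.faces.filter (fun F => v ∉ F)
  down_closed := by
    intro F hF H hH
    simp only [Finset.mem_filter] at *
    exact ⟨Δ.down_closed F hF.1 H hH, fun hv => hF.2 (hH hv)⟩

/-- The link of a vertex. -/
def SimplicialComplex.link (Δ : SimplicialComplex V) (v : V) :
    SimplicialComplex V where
  faces := Δ.faces.filter (fun F => v ∉ F ∧ insert v F ∈ Δ.faces)
  down_closed := by
    intro F hF H hH
    simp only [Finset.mem_filter] at *
    refine ⟨Δ.down_closed F hF.1 H hH, fun hv => hF.2.1 (hH hv), ?_⟩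
    exact Δ.down_closed _ hF.2.2 _ (Finset.insert_subset_insert v hH)

/-- Vertex decomposability. -/
inductive IsVertexDecomposable {V : Type*} [DecidableEq V] [Fintype V] :
    SimplicialComplex V → Prop
  | simplex (Δ : SimplicialComplex V) (F : Finset V)
      (h : Δ.faces = F.powerset) : IsVertexDecomposable Δ
  | step (Δ : SimplicialComplex V) (v : V)
      (hdel : IsVertexDecomposable (Δ.delete v))
      (hlink : IsVertexDecomposable (Δ.link v))
      (hfac : ∀ F ∈ (Δ.link v).faces, F ∉ (Δ.delete v).facetSet) :
      IsVertexDecomposable Δ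

/-!
Peel the last leaf `F` (with branch `M`) off a quasi-forest ordering of the facets of
`Ind(G[W])`. A vertex of `F \ M` lies in no other facet, so its non-neighbours in `W` all lie
in `F` and are pairwise non-adjacent: it is a simplicial vertex of the complement of `G[W]`.
Deleting `F \ M` from `W` deletes exactly the facet `F`, so the rest is again a quasi-forest,
and by induction every induced subgraph of the complement of `G` has a simplicial vertex.

Let `v` be such a vertex for `G[W]`, where `G[W]` has an edge. If some non-neighbour `x ≠ v`
of `v` has a neighbour `u`, then all neighbours of `x` are adjacent to `v`, and two
non-adjacent ones `a, b` would give the induced 4-cycle `v a x b`; so `N(x)` is a clique and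
`N(x) ⊆ N[u]`. Otherwise every non-isolated vertex `x ≠ v` satisfies `N(x) ⊆ N[v]`. In both
cases `u` is a shedding vertex of `Ind(G[W])`, since `x` extends every face of the link of `u`
to a face of its deletion, and induction on `W` concludes.
-/

namespace SimplicialComplex

@[ext]
theorem ext {Δ₁ Δ₂ : SimplicialComplex V} (h : Δ₁.faces = Δ₂.faces) : Δ₁ = Δ₂ := by
  cases Δ₁; cases Δ₂; simpa using h

theorem mem_facetSet {Δ : SimplicialComplex V} {F : Finset V} :
    F ∈ Δ.facetSet ↔ Maximal (· ∈ Δ.faces) F := by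
  simp only [facetSet, mem_filter, Maximal]
  exact and_congr_right fun _ =>
    ⟨fun h H hH hFH => (h H hH hFH).ge, fun h H hH hFH => le_antisymm hFH (h hH hFH)⟩

theorem exists_facet_superset (Δ : SimplicialComplex V) {F : Finset V} (hF : F ∈ Δ.faces) :
    ∃ N ∈ Δ.facetSet, F ⊆ N := by
  obtain ⟨N, hFN, hN⟩ := Δ.faces.exists_le_maximal hF
  exact ⟨N, mem_facetSet.2 hN, hFN⟩

theorem facetSet_eq_erase_of_faces_eq_filter {Δ Δ' : SimplicialComplex V} {S F M : Finset V}
    (hfaces : Δ'.faces = Δ.faces.filter (· ⊆ S)) (hM : M ∈ Δ.facetSet) (hMF : M ≠ F)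
    (hFS : F ∩ S ⊆ M) (hS : ∀ N ∈ Δ.facetSet, N ≠ F → N ⊆ S) :
    Δ'.facetSet = Δ.facetSet.erase F := by
  have hmem : ∀ {H}, H ∈ Δ'.faces ↔ H ∈ Δ.faces ∧ H ⊆ S := by simp [hfaces]
  ext N
  rw [mem_erase, mem_facetSet, mem_facetSet]
  constructor
  · intro hN
    obtain ⟨hNΔ, hNS⟩ := hmem.1 hN.1
    obtain ⟨P, hP, hNP⟩ := Δ.exists_facet_superset hNΔ
    by_cases hPF : P = F
    · have hNM : N ⊆ M := fun x hx => hFS (mem_inter.2 ⟨hPF ▸ hNP hx, hNS hx⟩)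
      have hMΔ' : M ∈ Δ'.faces := hmem.2 ⟨(mem_facetSet.1 hM).1, hS M hM hMF⟩
      rw [hN.eq_of_le hMΔ' hNM]
      exact ⟨hMF, mem_facetSet.1 hM⟩
    · have hPΔ' : P ∈ Δ'.faces := hmem.2 ⟨(mem_facetSet.1 hP).1, hS P hP hPF⟩
      rw [hN.eq_of_le hPΔ' hNP]
      exact ⟨hPF, mem_facetSet.1 hP⟩
  · rintro ⟨hNF, hN⟩
    exact ⟨hmem.2 ⟨hN.1, hS N (mem_facetSet.2 hN) hNF⟩, fun H hH => hN.2 (hmem.1 hH).1⟩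

theorem IsQuasiForest.exists_isLeafOf {Δ : SimplicialComplex V} (hΔ : Δ.IsQuasiForest)
    (hne : Δ.facetSet.Nonempty) :
    ∃ F, IsLeafOf Δ.facetSet F ∧
      ∀ Δ' : SimplicialComplex V, Δ'.facetSet = Δ.facetSet.erase F → Δ'.IsQuasiForest := by
  obtain ⟨l, hnd, hl, hleaf⟩ := hΔ
  rcases l.eq_nil_or_concat' with rfl | ⟨l, F, rfl⟩
  · simp [← hl] at hne
  have hFl : F ∉ l := fun h => (List.nodup_append.1 hnd).2.2 F h F (List.mem_singleton_self F) rfl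
  refine ⟨F, ?_, fun Δ' hΔ' => ⟨l, hnd.sublist (List.sublist_append_left _ _), ?_, fun i hi => ?_⟩⟩
  · have := hleaf l.length (by simp)
    rwa [List.take_of_length_le (by simp), List.getElem_concat_length rfl, hl] at this
  · rw [hΔ', ← hl, List.toFinset_append, List.toFinset_cons, List.toFinset_nil,
      insert_empty, union_comm, ← insert_eq, erase_insert (by simpa using hFl)]
  · have := hleaf i (by simp; omega)
    rwa [List.take_append_of_le_length hi, List.getElem_append_left hi] at this

end SimplicialComplex

namespace SimpleGraph

variable {α : Type*} (G : SimpleGraph α)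

def IsCosimplicialIn (W : Finset α) (v : α) : Prop :=
  ∀ a ∈ W, ∀ b ∈ W, ¬ G.Adj v a → ¬ G.Adj v b → ¬ G.Adj a b

/-- Every nonempty `U ⊆ W` has a simplicial vertex in the complement of `G[U]`; by Dirac's
characterisation this says that the complement of `G[W]` is chordal. -/
def IsCochordalOn (W : Finset α) : Prop :=
  ∀ U ⊆ W, U.Nonempty → ∃ v ∈ U, G.IsCosimplicialIn U v

variable {G}

theorem IsCosimplicialIn.mono {U W : Finset α} {v : α} (h : G.IsCosimplicialIn W v)
    (hUW : U ⊆ W) : G.IsCosimplicialIn U v :=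
  fun a ha b hb => h a (hUW ha) b (hUW hb)

theorem IsCochordalOn.mono {U W : Finset α} (h : G.IsCochordalOn W) (hUW : U ⊆ W) :
    G.IsCochordalOn U :=
  fun U' hU' => h U' (hU'.trans hUW)

theorem isCochordalOn_empty : G.IsCochordalOn ∅ :=
  fun _ hU hne => absurd (subset_empty.1 hU ▸ hne) Finset.not_nonempty_empty

theorem IsCochordalOn.of_sdiff [DecidableEq α] {W B : Finset α}
    (hB : ∀ v ∈ B, G.IsCosimplicialIn W v) (h : G.IsCochordalOn (W \ B)) :
    G.IsCochordalOn W := by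
  intro U hUW hU
  by_cases hUB : ∃ v ∈ U, v ∈ B
  · obtain ⟨v, hvU, hvB⟩ := hUB
    exact ⟨v, hvU, (hB v hvB).mono hUW⟩
  · push Not at hUB
    exact h U (fun x hx => mem_sdiff.2 ⟨hUW hx, hUB x hx⟩) hU

theorem hasInducedCycle_four_of_adj {v a x b : α} (hvx : v ≠ x) (hab : a ≠ b)
    (hva : G.Adj v a) (hax : G.Adj a x) (hxb : G.Adj x b) (hbv : G.Adj b v)
    (hnvx : ¬ G.Adj v x) (hnab : ¬ G.Adj a b) : G.HasInducedCycle 4 := by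
  have hZ : ∀ i : ZMod 4, i = 0 ∨ i = 1 ∨ i = 2 ∨ i = 3 := by decide
  refine ⟨by norm_num, ![v, a, x, b], fun i j hij => ?_, fun i j => ?_⟩ <;>
    rcases hZ i with rfl | rfl | rfl | rfl <;> rcases hZ j with rfl | rfl | rfl | rfl <;>
    simp_all +decide [G.adj_comm, hva.ne, hax.ne, hxb.ne, hbv.ne, hvx.symm, hab.symm]

theorem exists_adj_forall_adj_imp_adj (h4 : ¬ G.HasInducedCycle 4) {W : Finset α} {v a b : α}
    (hv : v ∈ W) (hcos : G.IsCosimplicialIn W v) (ha : a ∈ W) (hb : b ∈ W) (hab : G.Adj a b) :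
    ∃ x ∈ W, ∃ u ∈ W, G.Adj x u ∧ ∀ c ∈ W, G.Adj x c → c ≠ u → G.Adj u c := by
  by_cases hfar : ∃ x ∈ W, x ≠ v ∧ ¬ G.Adj v x ∧ ∃ u ∈ W, G.Adj x u
  · obtain ⟨x, hx, hxv, hvx, u, hu, hxu⟩ := hfar
    have hnbr : ∀ c ∈ W, G.Adj x c → G.Adj v c := fun c hc hxc =>
      by_contra fun hvc => hcos x hx c hc hvx hvc hxc
    refine ⟨x, hx, u, hu, hxu, fun c hc hxc hcu => by_contra fun huc => h4 ?_⟩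
    exact G.hasInducedCycle_four_of_adj hxv.symm hcu.symm (hnbr u hu hxu) hxu.symm hxc
      (hnbr c hc hxc).symm hvx huc
  · push Not at hfar
    have hnear : ∀ x ∈ W, ∀ y ∈ W, G.Adj x y → x ≠ v → G.Adj v x := fun x hx y hy hxy hxv =>
      by_contra fun hvx => hfar x hx hxv hvx y hy hxy
    have hwitness : ∀ x ∈ W, ∀ y ∈ W, G.Adj x y → x ≠ v →
        ∃ x ∈ W, ∃ u ∈ W, G.Adj x u ∧ ∀ c ∈ W, G.Adj x c → c ≠ u → G.Adj u c :=
      fun x hx y hy hxy hxv => ⟨x, hx, v, hv, (hnear x hx y hy hxy hxv).symm,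
        fun c hc hxc hcv => hnear c hc x hx hxc.symm hcv⟩
    rcases eq_or_ne a v with rfl | hav
    · exact hwitness b hb a ha hab.symm hab.ne'
    · exact hwitness a ha b hb hab hav

end SimpleGraph

section IndependenceComplex

open SimplicialComplex SimpleGraph

variable (G : SimpleGraph V) [DecidableRel G.Adj]

/-- `Ind(G[W])`, kept on the ambient vertex type `V` so that deletions and links of vertices
are again of this form. -/
def indOn (W : Finset V) : SimplicialComplex V where
  faces := univ.filter (fun F => F ⊆ W ∧ ∀ a ∈ F, ∀ b ∈ F, ¬ G.Adj a b)
  down_closed F hF H hH := by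
    simp only [mem_filter, mem_univ, true_and] at *
    exact ⟨hH.trans hF.1, fun a ha b hb => hF.2 a (hH ha) b (hH hb)⟩

variable {G}

@[simp]
theorem mem_indOn_faces {W F : Finset V} :
    F ∈ (indOn G W).faces ↔ F ⊆ W ∧ ∀ a ∈ F, ∀ b ∈ F, ¬ G.Adj a b := by
  simp [indOn]

theorem insert_mem_indOn_faces {W F : Finset V} {x : V} :
    insert x F ∈ (indOn G W).faces ↔
      x ∈ W ∧ (∀ c ∈ F, ¬ G.Adj x c) ∧ F ∈ (indOn G W).faces := by
  simp only [mem_indOn_faces, insert_subset_iff, forall_mem_insert, G.irrefl, not_false_eq_true,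
    true_and]
  constructor
  · rintro ⟨⟨hx, hFW⟩, hxF, hF⟩
    exact ⟨hx, hxF, hFW, fun a ha => (hF a ha).2⟩
  · rintro ⟨hx, hxF, hFW, hF⟩
    exact ⟨⟨hx, hFW⟩, hxF, fun a ha => ⟨fun h => hxF a ha h.symm, hF a ha⟩⟩

theorem indOn_univ : indOn G univ = indComplex G := by
  ext F
  simp [indComplex]

theorem indOn_delete (W : Finset V) (u : V) : (indOn G W).delete u = indOn G (W.erase u) := by
  ext F
  simp only [SimplicialComplex.delete, mem_filter, mem_indOn_faces, subset_erase]
  tauto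

theorem indOn_link {W : Finset V} {u : V} (hu : u ∈ W) :
    (indOn G W).link u = indOn G ((W.erase u).filter (¬ G.Adj u ·)) := by
  ext F
  simp only [SimplicialComplex.link, mem_filter]
  rw [insert_mem_indOn_faces]
  simp only [mem_indOn_faces, subset_iff, mem_filter, mem_erase]
  grind

theorem isCosimplicialIn_of_forall_facet_eq {W F : Finset V} {v : V} (hv : v ∈ W)
    (huniq : ∀ N ∈ (indOn G W).facetSet, v ∈ N → N = F) : G.IsCosimplicialIn W v := by
  have hF : ∀ a ∈ W, ¬ G.Adj v a → a ∈ F ∧ F ∈ (indOn G W).faces := by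
    intro a ha hva
    have hpair : {v, a} ∈ (indOn G W).faces := by
      rw [insert_mem_indOn_faces]
      simp [hv, ha, hva]
    obtain ⟨N, hN, hvaN⟩ := (indOn G W).exists_facet_superset hpair
    obtain rfl := huniq N hN (hvaN (mem_insert_self v {a}))
    exact ⟨hvaN (mem_insert_of_mem (mem_singleton_self a)), (mem_facetSet.1 hN).1⟩
  intro a ha b hb hva hvb
  obtain ⟨haF, hFface⟩ := hF a ha hva
  exact (mem_indOn_faces.1 hFface).2 a haF b (hF b hb hvb).1

theorem isCochordalOn_of_isQuasiForest (W : Finset V) (hq : (indOn G W).IsQuasiForest) :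
    G.IsCochordalOn W := by
  induction W using Finset.strongInduction with
  | _ W ih =>
  have hne : (indOn G W).facetSet.Nonempty :=
    let ⟨N, hN, _⟩ := (indOn G W).exists_facet_superset (F := ∅) (by simp)
    ⟨N, hN⟩
  obtain ⟨F, ⟨hF, hsingle | ⟨M, hM, hMF, hbranch⟩⟩, hpeel⟩ := hq.exists_isLeafOf hne
  · refine IsCochordalOn.of_sdiff (B := W) (fun v hv => ?_) (by simpa using isCochordalOn_empty)
    exact isCosimplicialIn_of_forall_facet_eq hv fun N hN _ => by simpa [hsingle] using hN
  have hprivate : ∀ v ∈ F \ M, ∀ N ∈ (indOn G W).facetSet, v ∈ N → N = F := by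
    intro v hv N hN hvN
    by_contra hNF
    have hvF := mem_sdiff.1 hv
    exact hvF.2 (mem_inter.1 (hbranch N hN hNF (mem_inter.2 ⟨hvN, hvF.1⟩))).1
  have hFW : F ⊆ W := (mem_indOn_faces.1 (mem_facetSet.1 hF).1).1
  have hB : (F \ M).Nonempty := sdiff_nonempty.2 fun hFM =>
    hMF ((mem_facetSet.1 hF).eq_of_le (mem_facetSet.1 hM).1 hFM).symm
  have hfacets : (indOn G (W \ (F \ M))).facetSet = (indOn G W).facetSet.erase F := by
    refine facetSet_eq_erase_of_faces_eq_filter (S := W \ (F \ M)) ?_ hM hMF ?_ ?_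
    · ext H
      simp only [mem_indOn_faces, mem_filter, subset_sdiff]
      tauto
    · intro x hx
      simp only [mem_inter, mem_sdiff] at hx
      tauto
    · intro N hN hNF x hxN
      exact mem_sdiff.2 ⟨(mem_indOn_faces.1 (mem_facetSet.1 hN).1).1 hxN,
        fun hx => hNF (hprivate x hx N hN hxN)⟩
  refine IsCochordalOn.of_sdiff
    (fun v hv => isCosimplicialIn_of_forall_facet_eq (hFW (mem_sdiff.1 hv).1) (hprivate v hv))
    (ih _ (sdiff_ssubset (sdiff_subset.trans hFW) hB) (hpeel _ hfacets))

theorem notMem_facetSet_delete_of_mem_link {W F : Finset V} {x u : V} (hx : x ∈ W)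
    (hxu : G.Adj x u) (hdom : ∀ c ∈ W, G.Adj x c → c ≠ u → G.Adj u c)
    (hF : F ∈ ((indOn G W).link u).faces) : F ∉ ((indOn G W).delete u).facetSet := by
  intro hFmax
  simp only [SimplicialComplex.link, mem_filter, insert_mem_indOn_faces] at hF
  obtain ⟨hF, huF, -, hnu, -⟩ := hF
  have hxF : insert x F ∈ ((indOn G W).delete u).faces := by
    simp only [SimplicialComplex.delete, mem_filter, insert_mem_indOn_faces, mem_insert, not_or]
    exact ⟨⟨hx, fun c hc hxc => hnu c hc (hdom c ((mem_indOn_faces.1 hF).1 hc) hxc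
      (ne_of_mem_of_not_mem hc huF)), hF⟩, hxu.ne', huF⟩
  have hxF' := (mem_facetSet.1 hFmax).eq_of_le hxF (subset_insert x F)
  exact hnu x (hxF' ▸ mem_insert_self x F) hxu.symm

theorem isVertexDecomposable_indOn (h4 : ¬ G.HasInducedCycle 4) (W : Finset V)
    (hW : G.IsCochordalOn W) : IsVertexDecomposable (indOn G W) := by
  induction W using Finset.strongInduction with
  | _ W ih =>
  by_cases hE : ∃ a ∈ W, ∃ b ∈ W, G.Adj a b
  · obtain ⟨a, ha, b, hb, hab⟩ := hE
    obtain ⟨v, hv, hcos⟩ := hW W subset_rfl ⟨a, ha⟩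
    obtain ⟨x, hx, u, hu, hxu, hdom⟩ := G.exists_adj_forall_adj_imp_adj h4 hv hcos ha hb hab
    have hdel : W.erase u ⊂ W := erase_ssubset hu
    have hlink : (W.erase u).filter (¬ G.Adj u ·) ⊂ W := (filter_subset _ _).trans_ssubset hdel
    refine .step _ u ?_ ?_ fun F => notMem_facetSet_delete_of_mem_link hx hxu hdom
    · rw [indOn_delete]
      exact ih _ hdel (hW.mono hdel.subset)
    · rw [indOn_link hu]
      exact ih _ hlink (hW.mono hlink.subset)
  · push Not at hE
    refine .simplex _ W (Finset.ext fun F => ?_)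
    simp only [mem_indOn_faces, mem_powerset, and_iff_left_iff_imp]
    exact fun hFW a ha b hb => hE a (hFW ha) b (hFW hb)

end IndependenceComplex

/-- If `Ind(G)` is a quasi-forest and `G` has no induced 4-cycle, then
`Ind(G)` is vertex decomposable. -/
theorem stmt17 {V : Type*} [DecidableEq V] [Fintype V] (G : SimpleGraph V)
    [DecidableRel G.Adj] (hq : (indComplex G).IsQuasiForest)
    (h4 : ¬ G.HasInducedCycle 4) :
    IsVertexDecomposable (indComplex G) := by
  rw [← indOn_univ] at hq ⊢
  exact isVertexDecomposable_indOn h4 univ (isCochordalOn_of_isQuasiForest univ hq)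
end
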